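/- Let z = x + iy be a complex number with y ≠ 0 or x² ≤ 1, let r₁ = |z−1|, r₂ = |z+1|, α = (r₁+r₂)/2, β = (r₂−r₁)/2. Then the complex number Y(z) = α·√(1−β²) − i·sign(y)·β·√(α²−1) satisfies Y(z)² = 1 − z². -/

import Mathlib

open Complex

/-- `α(w) = (|w-1| + |w+1|)/2`. -/
noncomputable def alpha (w : ℂ) : ℝ := (‖w - 1‖ + ‖w + 1‖) / 2

/-- `β(w) = (|w+1| - |w-1|)/2`. -/
noncomputable def beta (w : ℂ) : ℝ := (‖w + 1‖ - ‖w - 1‖) / 2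

/-- Principal branch `Y(w)` of `√(1-w²)` on the cut plane `ℂ ∖ ((-∞,-1) ∪ (1,∞))`. -/
noncomputable def Y (w : ℂ) : ℂ :=
  (alpha w * Real.sqrt (1 - (beta w) ^ 2) : ℝ) -
    Complex.I * (Real.sign w.im : ℝ) * (beta w * Real.sqrt ((alpha w) ^ 2 - 1) : ℝ)

/-!
With `x = re w`, `y = im w`, the squared distances `|w ∓ 1|² = (x ∓ 1)² + y²` give
`αβ = x` and `α² + β² = x² + y² + 1`, hence `(1 - β²)(α² - 1) = y²`. Expanding `Y²`,
its imaginary part is `-2 sign(y) αβ √((1 - β²)(α² - 1)) = -2 x y`, and its real part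
`α²(1 - β²) - sign(y)² β²(α² - 1)` equals `1 - x² + y²`: directly when `y ≠ 0`, and when
`y = 0` because `x² ≤ 1` forces `α = 1`.
-/

theorem Real.sign_mul_abs (r : ℝ) : Real.sign r * |r| = r := by
  rcases lt_trichotomy r 0 with hr | rfl | hr
  · rw [Real.sign_of_neg hr, abs_of_neg hr]; ring
  · simp
  · rw [Real.sign_of_pos hr, abs_of_pos hr]; ring

theorem Real.sign_sq_of_ne_zero {r : ℝ} (hr : r ≠ 0) : Real.sign r ^ 2 = 1 := by
  rcases Real.sign_apply_eq_of_ne_zero r hr with h | h <;> rw [h] <;> norm_num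

theorem Complex.sq_norm_sub_one (w : ℂ) : ‖w - 1‖ ^ 2 = (w.re - 1) ^ 2 + w.im ^ 2 := by
  rw [Complex.sq_norm, Complex.normSq_apply]
  simp only [sub_re, one_re, sub_im, one_im, sub_zero]; ring

theorem Complex.sq_norm_add_one (w : ℂ) : ‖w + 1‖ ^ 2 = (w.re + 1) ^ 2 + w.im ^ 2 := by
  rw [Complex.sq_norm, Complex.normSq_apply]
  simp only [add_re, one_re, add_im, one_im, add_zero]; ring

theorem alpha_mul_beta (w : ℂ) : alpha w * beta w = w.re := by
  have h : alpha w * beta w = (‖w + 1‖ ^ 2 - ‖w - 1‖ ^ 2) / 4 := by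
    rw [alpha, beta]; ring
  rw [h, Complex.sq_norm_add_one, Complex.sq_norm_sub_one]; ring

theorem alpha_sq_add_beta_sq (w : ℂ) : alpha w ^ 2 + beta w ^ 2 = w.re ^ 2 + w.im ^ 2 + 1 := by
  have h : alpha w ^ 2 + beta w ^ 2 = (‖w + 1‖ ^ 2 + ‖w - 1‖ ^ 2) / 2 := by
    rw [alpha, beta]; ring
  rw [h, Complex.sq_norm_add_one, Complex.sq_norm_sub_one]; ring

theorem one_le_alpha (w : ℂ) : 1 ≤ alpha w := by
  have h : ‖(w + 1) - (w - 1)‖ ≤ ‖w + 1‖ + ‖w - 1‖ := norm_sub_le _ _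
  norm_num at h
  rw [alpha]; linarith

theorem beta_sq_le_one (w : ℂ) : beta w ^ 2 ≤ 1 := by
  have h : |‖w + 1‖ - ‖w - 1‖| ≤ ‖(w + 1) - (w - 1)‖ := abs_norm_sub_norm_le _ _
  norm_num at h
  rw [beta, div_pow, div_le_one (by norm_num), ← sq_abs]
  nlinarith [abs_nonneg (‖w + 1‖ - ‖w - 1‖)]

theorem one_sub_beta_sq_mul_alpha_sq_sub_one (w : ℂ) :
    (1 - beta w ^ 2) * (alpha w ^ 2 - 1) = w.im ^ 2 := by
  linear_combination alpha_sq_add_beta_sq w - (alpha w * beta w + w.re) * alpha_mul_beta w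

theorem alpha_eq_one_of_im_eq_zero {w : ℂ} (hy : w.im = 0) (hx : w.re ^ 2 ≤ 1) :
    alpha w = 1 := by
  have hprod := one_sub_beta_sq_mul_alpha_sq_sub_one w
  have hsum := alpha_sq_add_beta_sq w
  rw [hy, zero_pow two_ne_zero] at hprod hsum
  refine le_antisymm ?_ (one_le_alpha w)
  by_contra! ha
  have hb : beta w ^ 2 = 1 := by
    have : alpha w ^ 2 - 1 ≠ 0 := by nlinarith
    linarith [(mul_eq_zero.mp hprod).resolve_right this]
  nlinarith

theorem Y_re (w : ℂ) : (Y w).re = alpha w * Real.sqrt (1 - beta w ^ 2) := by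
  simp [Y]

theorem Y_im (w : ℂ) :
    (Y w).im = -(Real.sign w.im * (beta w * Real.sqrt (alpha w ^ 2 - 1))) := by
  simp [Y]

theorem Y_re_mul_Y_im (w : ℂ) : (Y w).re * (Y w).im = -(w.re * w.im) := by
  have hroot : Real.sqrt (1 - beta w ^ 2) * Real.sqrt (alpha w ^ 2 - 1) = |w.im| := by
    rw [← Real.sqrt_mul (by linarith [beta_sq_le_one w]), one_sub_beta_sq_mul_alpha_sq_sub_one,
      Real.sqrt_sq_eq_abs]
  calc (Y w).re * (Y w).im
      = -((alpha w * beta w) * (Real.sign w.im *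
          (Real.sqrt (1 - beta w ^ 2) * Real.sqrt (alpha w ^ 2 - 1)))) := by
        rw [Y_re, Y_im]; ring
    _ = -(w.re * w.im) := by rw [alpha_mul_beta, hroot, Real.sign_mul_abs]

theorem Y_re_sq_sub_Y_im_sq {w : ℂ} (h : w.im ≠ 0 ∨ w.re ^ 2 ≤ 1) :
    (Y w).re ^ 2 - (Y w).im ^ 2 = 1 - w.re ^ 2 + w.im ^ 2 := by
  have hre : (Y w).re ^ 2 = alpha w ^ 2 * (1 - beta w ^ 2) := by
    rw [Y_re, mul_pow, Real.sq_sqrt (by linarith [beta_sq_le_one w])]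
  have him : (Y w).im ^ 2 = Real.sign w.im ^ 2 * (beta w ^ 2 * (alpha w ^ 2 - 1)) := by
    rw [Y_im, neg_sq, mul_pow, mul_pow, Real.sq_sqrt (by nlinarith [one_le_alpha w])]
  rw [hre, him]
  by_cases hy : w.im = 0
  · have ha := alpha_eq_one_of_im_eq_zero hy (h.resolve_left (not_not.mpr hy))
    have hsum := alpha_sq_add_beta_sq w
    rw [hy, ha] at hsum
    rw [hy, Real.sign_zero, ha]
    linear_combination -hsum
  · rw [Real.sign_sq_of_ne_zero hy]
    linear_combination alpha_sq_add_beta_sq w - 2 * (alpha w * beta w + w.re) * alpha_mul_beta w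

theorem stmt6 (z : ℂ) (h : z.im ≠ 0 ∨ z.re ^ 2 ≤ 1) : (Y z) ^ 2 = 1 - z ^ 2 := by
  apply Complex.ext
  · simp only [sq, Complex.mul_re, Complex.sub_re, Complex.one_re]
    linear_combination Y_re_sq_sub_Y_im_sq h
  · simp only [sq, Complex.mul_im, Complex.sub_im, Complex.one_im]
    linear_combination 2 * Y_re_mul_Y_im z
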